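/- In the parallel-split CRN (union of the reactions of two CRNs C₁ over species including X_{i,1} and C₂ over X_{i,2}, disjoint except for the split reactions, plus split reactions X_i → X_{i,1} + X_{i,2}), if a bi-execution from a valid initial configuration i (only X-species present) ends at a configuration c with c(X_i) = 0 for all i and never applies any split reaction in reverse, then c is bireachable from i via a bi-execution in which all applications of split reactions occur first, i.e., i forward-reaches i* (the configuration with i(X_i) copies each of X_{i,1} and X_{i,2}) and i* bireaches c without using split reactions. -/
import Mathlib


section
variable {k : ℕ} {Λ1 Λ2 : Type*} [DecidableEq Λ1] [DecidableEq Λ2]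

/-- Species of the parallel-split CRN: input species `Xᵢ` (`Sum.inl i`),
the species of `C₁` (`Sum.inr (Sum.inl _)`), and those of `C₂`. -/
abbrev PSp (k : ℕ) (Λ1 Λ2 : Type*) := Fin k ⊕ (Λ1 ⊕ Λ2)

def single [DecidableEq Λ] (s : Λ) : Λ → ℕ := fun t => if t = s then 1 else 0

/-- Lift a configuration over `Λ1` to the combined species set. -/
def lift1 (c : Λ1 → ℕ) : PSp k Λ1 Λ2 → ℕ
  | Sum.inr (Sum.inl s) => c s
  | _ => 0

/-- Lift a configuration over `Λ2` to the combined species set. -/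
def lift2 (c : Λ2 → ℕ) : PSp k Λ1 Λ2 → ℕ
  | Sum.inr (Sum.inr s) => c s
  | _ => 0

/-- The split reactions `Xᵢ → X_{i,1} + X_{i,2}`. -/
def Rsplit (X1 : Fin k → Λ1) (X2 : Fin k → Λ2) :
    Set ((PSp k Λ1 Λ2 → ℕ) × (PSp k Λ1 Λ2 → ℕ)) :=
  ⋃ i : Fin k, {(single (Sum.inl i),
    fun l => single (Sum.inr (Sum.inl (X1 i)) : PSp k Λ1 Λ2) l +
             single (Sum.inr (Sum.inr (X2 i)) : PSp k Λ1 Λ2) l)}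

/-- The (lifted) reactions of `C₁` and `C₂`. -/
def RC (R1 : Set ((Λ1 → ℕ) × (Λ1 → ℕ))) (R2 : Set ((Λ2 → ℕ) × (Λ2 → ℕ))) :
    Set ((PSp k Λ1 Λ2 → ℕ) × (PSp k Λ1 Λ2 → ℕ)) :=
  ((fun r : (Λ1 → ℕ) × (Λ1 → ℕ) => ((lift1 r.1 : PSp k Λ1 Λ2 → ℕ), lift1 r.2)) '' R1) ∪
  ((fun r : (Λ2 → ℕ) × (Λ2 → ℕ) => ((lift2 r.1 : PSp k Λ1 Λ2 → ℕ), lift2 r.2)) '' R2)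

def Step {Λ : Type*} (R : Set ((Λ → ℕ) × (Λ → ℕ))) (x y : Λ → ℕ) : Prop :=
  ∃ r ∈ R, (∀ l, r.1 l ≤ x l) ∧ y = fun l => x l - r.1 l + r.2 l

def RevStep {Λ : Type*} (R : Set ((Λ → ℕ) × (Λ → ℕ))) (x y : Λ → ℕ) : Prop :=
  ∃ r ∈ R, (∀ l, r.2 l ≤ x l) ∧ y = fun l => x l - r.2 l + r.1 l

/-- Split-closure: the configuration obtained from `x` by splitting all remaining `Xⱼ`. -/
def phi (X1 : Fin k → Λ1) (X2 : Fin k → Λ2) (x : PSp k Λ1 Λ2 → ℕ) : PSp k Λ1 Λ2 → ℕ :=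
  fun l => (match l with | Sum.inl _ => 0 | Sum.inr a => x (Sum.inr a)) +
    ∑ j : Fin k, x (Sum.inl j) *
      (single (Sum.inr (Sum.inl (X1 j)) : PSp k Λ1 Λ2) l +
       single (Sum.inr (Sum.inr (X2 j)) : PSp k Λ1 Λ2) l)

lemma phi_inl (X1 : Fin k → Λ1) (X2 : Fin k → Λ2) (x : PSp k Λ1 Λ2 → ℕ) (j : Fin k) :
    phi X1 X2 x (Sum.inl j) = 0 := by
  simp [phi, single]

lemma phi_split (X1 : Fin k → Λ1) (X2 : Fin k → Λ2) (x : PSp k Λ1 Λ2 → ℕ) (j : Fin k)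
    (hj : 1 ≤ x (Sum.inl j)) :
    phi X1 X2 (fun l => x l - single (Sum.inl j : PSp k Λ1 Λ2) l +
      (single (Sum.inr (Sum.inl (X1 j)) : PSp k Λ1 Λ2) l +
       single (Sum.inr (Sum.inr (X2 j)) : PSp k Λ1 Λ2) l)) = phi X1 X2 x := by
  funext l
  cases l with
  | inl j' => rw [phi_inl, phi_inl]
  | inr a =>
    simp only [phi, single]
    rw [← Finset.add_sum_erase _ _ (Finset.mem_univ j), ← Finset.add_sum_erase _ _ (Finset.mem_univ j)]
    have h1 : ∀ j' : Fin k, j' ∈ Finset.univ.erase j →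
        ((x (Sum.inl j') - (if (Sum.inl j' : PSp k Λ1 Λ2) = Sum.inl j then 1 else 0) +
          ((if (Sum.inl j' : PSp k Λ1 Λ2) = Sum.inr (Sum.inl (X1 j)) then 1 else 0) +
           (if (Sum.inl j' : PSp k Λ1 Λ2) = Sum.inr (Sum.inr (X2 j)) then 1 else 0))) *
          ((if (Sum.inr a : PSp k Λ1 Λ2) = Sum.inr (Sum.inl (X1 j')) then 1 else 0) +
           (if (Sum.inr a : PSp k Λ1 Λ2) = Sum.inr (Sum.inr (X2 j')) then 1 else 0)))
        = x (Sum.inl j') *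
          ((if (Sum.inr a : PSp k Λ1 Λ2) = Sum.inr (Sum.inl (X1 j')) then 1 else 0) +
           (if (Sum.inr a : PSp k Λ1 Λ2) = Sum.inr (Sum.inr (X2 j')) then 1 else 0)) := by
      intro j' hj'
      have : j' ≠ j := (Finset.mem_erase.mp hj').1
      simp [this]
    rw [Finset.sum_congr rfl h1]
    obtain ⟨n, hn⟩ : ∃ n, x (Sum.inl j) = n + 1 := ⟨x (Sum.inl j) - 1, by omega⟩
    simp [hn]
    ring

/-- Any configuration split-reaches its split-closure. -/
lemma reach_phi (X1 : Fin k → Λ1) (X2 : Fin k → Λ2) :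
    ∀ (N : ℕ) (x : PSp k Λ1 Λ2 → ℕ), (∑ j : Fin k, x (Sum.inl j)) = N →
    Relation.ReflTransGen (Step (Rsplit X1 X2)) x (phi X1 X2 x) := by
  intro N
  induction N with
  | zero =>
    intro x hx
    have h0 : ∀ j, x (Sum.inl j) = 0 := by
      intro j
      have := Finset.sum_eq_zero_iff.mp hx j (Finset.mem_univ j)
      exact this
    have : phi X1 X2 x = x := by
      funext l
      cases l with
      | inl j => rw [phi_inl]; exact (h0 j).symm
      | inr a => simp [phi, h0]
    rw [this]
  | succ n ih =>
    intro x hx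
    have : ∃ j, x (Sum.inl j) ≠ 0 := by
      by_contra h
      push_neg at h
      simp [h] at hx
    obtain ⟨j, hj⟩ := this
    set y : PSp k Λ1 Λ2 → ℕ := fun l => x l - single (Sum.inl j : PSp k Λ1 Λ2) l +
      (single (Sum.inr (Sum.inl (X1 j)) : PSp k Λ1 Λ2) l +
       single (Sum.inr (Sum.inr (X2 j)) : PSp k Λ1 Λ2) l) with hy
    have hstep : Step (Rsplit X1 X2) x y := by
      refine ⟨(single (Sum.inl j : PSp k Λ1 Λ2),
        fun l => single (Sum.inr (Sum.inl (X1 j)) : PSp k Λ1 Λ2) l +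
                 single (Sum.inr (Sum.inr (X2 j)) : PSp k Λ1 Λ2) l),
        Set.mem_iUnion.mpr ⟨j, rfl⟩, ?_, hy⟩
      intro l
      cases l with
      | inl j' =>
        simp only [single]
        split_ifs with h
        · cases h; omega
        · omega
      | inr a => simp [single]
    have hsum : (∑ j' : Fin k, y (Sum.inl j')) = n := by
      have : ∀ j' : Fin k, y (Sum.inl j') = x (Sum.inl j') - (if j' = j then 1 else 0) := by
        intro j'
        simp only [hy, single]
        by_cases h : j' = j <;> simp [h]
      rw [Finset.sum_congr rfl (fun j' _ => this j')]
      rw [← Finset.add_sum_erase _ _ (Finset.mem_univ j)] at hx ⊢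
      have h2 : ∀ j' ∈ Finset.univ.erase j,
          x (Sum.inl j') - (if j' = j then 1 else 0) = x (Sum.inl j') := by
        intro j' hj'
        simp [(Finset.mem_erase.mp hj').1]
      rw [Finset.sum_congr rfl h2]
      simp
      omega
    have hphi : phi X1 X2 y = phi X1 X2 x := phi_split X1 X2 x j (by omega)
    exact Relation.ReflTransGen.head hstep (hphi ▸ ih y hsum)

/-- RC steps commute with the split-closure. -/
lemma step_phi (X1 : Fin k → Λ1) (X2 : Fin k → Λ2) {a p x : PSp k Λ1 Λ2 → ℕ}
    (ha : ∀ j, a (Sum.inl j) = 0) (hp : ∀ j, p (Sum.inl j) = 0)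
    (hax : ∀ l, a l ≤ x l) :
    (∀ l, a l ≤ phi X1 X2 x l) ∧
    phi X1 X2 (fun l => x l - a l + p l) = fun l => phi X1 X2 x l - a l + p l := by
  constructor
  · intro l
    cases l with
    | inl j => rw [ha]; omega
    | inr b =>
      calc a (Sum.inr b) ≤ x (Sum.inr b) := hax _
        _ ≤ phi X1 X2 x (Sum.inr b) := by simp [phi]
  · funext l
    cases l with
    | inl j => rw [phi_inl, phi_inl, ha, hp]
    | inr b =>
      simp only [phi, ha, hp, Nat.sub_zero, Nat.add_zero]
      have := hax (Sum.inr b)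
      omega

lemma RC_inl_zero {R1 : Set ((Λ1 → ℕ) × (Λ1 → ℕ))} {R2 : Set ((Λ2 → ℕ) × (Λ2 → ℕ))}
    {r : (PSp k Λ1 Λ2 → ℕ) × (PSp k Λ1 Λ2 → ℕ)} (hr : r ∈ RC R1 R2) :
    (∀ j, r.1 (Sum.inl j) = 0) ∧ (∀ j, r.2 (Sum.inl j) = 0) := by
  rcases hr with ⟨s, _, rfl⟩ | ⟨s, _, rfl⟩ <;> exact ⟨fun j => rfl, fun j => rfl⟩

/-- in the parallel-split CRN, a bi-execution from a valid initial
configuration `i` to `c` with no `X` remaining, which never reverse-applies a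
split reaction, can be rearranged so all split reactions occur first: `i`
forward-reaches (via splits only) the duplicated configuration `i*`, which
bireaches `c` without using split reactions. -/
theorem parallel_split_shuffle
    (X1 : Fin k → Λ1) (X2 : Fin k → Λ2) (hX1 : Function.Injective X1)
    (hX2 : Function.Injective X2)
    (R1 : Set ((Λ1 → ℕ) × (Λ1 → ℕ))) (R2 : Set ((Λ2 → ℕ) × (Λ2 → ℕ)))
    (i c : PSp k Λ1 Λ2 → ℕ)
    (hvalid : ∀ a : Λ1 ⊕ Λ2, i (Sum.inr a) = 0)
    (hexec : Relation.ReflTransGen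
      (fun x y => Step (RC R1 R2 ∪ Rsplit X1 X2) x y ∨ RevStep (RC R1 R2) x y) i c)
    (hc : ∀ j : Fin k, c (Sum.inl j) = 0) :
    Relation.ReflTransGen (Step (Rsplit X1 X2)) i
      (fun l => ∑ j : Fin k, i (Sum.inl j) *
        (single (Sum.inr (Sum.inl (X1 j)) : PSp k Λ1 Λ2) l +
         single (Sum.inr (Sum.inr (X2 j)) : PSp k Λ1 Λ2) l)) ∧
    Relation.ReflTransGen (fun x y => Step (RC R1 R2) x y ∨ RevStep (RC R1 R2) x y)
      (fun l => ∑ j : Fin k, i (Sum.inl j) *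
        (single (Sum.inr (Sum.inl (X1 j)) : PSp k Λ1 Λ2) l +
         single (Sum.inr (Sum.inr (X2 j)) : PSp k Λ1 Λ2) l)) c := by
  have hphii : phi X1 X2 i = (fun l => ∑ j : Fin k, i (Sum.inl j) *
      (single (Sum.inr (Sum.inl (X1 j)) : PSp k Λ1 Λ2) l +
       single (Sum.inr (Sum.inr (X2 j)) : PSp k Λ1 Λ2) l)) := by
    funext l
    cases l with
    | inl j => simp [phi, single]
    | inr a => simp [phi, hvalid]
  have hphic : phi X1 X2 c = c := by
    funext l
    cases l with
    | inl j => rw [phi_inl]; exact (hc j).symm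
    | inr a => simp [phi, hc]
  have key : ∀ x y : PSp k Λ1 Λ2 → ℕ, Relation.ReflTransGen
      (fun x y => Step (RC R1 R2 ∪ Rsplit X1 X2) x y ∨ RevStep (RC R1 R2) x y) x y →
      Relation.ReflTransGen (fun x y => Step (RC R1 R2) x y ∨ RevStep (RC R1 R2) x y)
        (phi X1 X2 x) (phi X1 X2 y) := by
    intro x y h
    induction h with
    | refl => exact .refl
    | tail _ hstep ih =>
      rename_i b d _
      rcases hstep with ⟨r, hr, hle, rfl⟩ | ⟨r, hr, hle, rfl⟩
      · rcases hr with hr | hr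
        · obtain ⟨h1, h2⟩ := RC_inl_zero hr
          obtain ⟨hle', heq⟩ := step_phi X1 X2 h1 h2 hle
          exact ih.tail (Or.inl ⟨r, hr, hle', heq⟩)
        · obtain ⟨j, hj⟩ := Set.mem_iUnion.mp hr
          rw [Set.mem_singleton_iff] at hj
          subst hj
          have hj1 : 1 ≤ b (Sum.inl j) := by
            have := hle (Sum.inl j)
            simpa [single] using this
          have hE : phi X1 X2 (fun l => b l -
              single (Sum.inl j : PSp k Λ1 Λ2) l +
              ((fun l => single (Sum.inr (Sum.inl (X1 j)) : PSp k Λ1 Λ2) l +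
                single (Sum.inr (Sum.inr (X2 j)) : PSp k Λ1 Λ2) l) l)) = phi X1 X2 b :=
            phi_split X1 X2 b j hj1
          rw [hE]
          exact ih
      · obtain ⟨h1, h2⟩ := RC_inl_zero hr
        obtain ⟨hle', heq⟩ := step_phi X1 X2 h2 h1 hle
        exact ih.tail (Or.inr ⟨r, hr, hle', heq⟩)
  constructor
  · rw [← hphii]
    exact reach_phi X1 X2 (∑ j : Fin k, i (Sum.inl j)) i rfl
  · rw [← hphii, ← hphic]
    exact key i c hexec

end
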